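/- arXiv:2301.02774 — 5 statements merged into one kernel-verified Lean document; each statement's English description precedes it below -/
import Mathlib

section
/- For the A.III case with m = n = 2, the Hamiltonian H = (1/2)(p1^2+p2^2+p3^2+p4^2) + (1/2)(q1^2+q2^2)^2 + (1/2)(q3^2+q4^2)^2 + (q1*q3+q2*q4)^2 + ((a1-b1)/2)q1^2 + ((a1-b2)/2)q2^2 + ((a2-b1)/2)q3^2 + ((a2-b2)/2)q4^2 Poisson-commutes with the quadratic integral f1 = -M12^2/(a1-a2) + p1^2 + p2^2 + (q1^2+q2^2+q3^2+a1-b1)q1^2 + (q1^2+q2^2+q4^2+a1-b2)q2^2 + 2q1q2q3q4, where M12 = (q1*p3-q3*p1)+(q2*p4-q4*p2), for any real parameters a1 ≠ a2, b1, b2. -/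
/-- Canonical Poisson bracket of two functions on `T*ℝⁿ ≅ (Fin n → ℝ) × (Fin n → ℝ)`,
`{f,g} = ∑ i, (∂f/∂qᵢ ∂g/∂pᵢ - ∂f/∂pᵢ ∂g/∂qᵢ)`. -/
noncomputable def pb {n : ℕ} (f g : (Fin n → ℝ) × (Fin n → ℝ) → ℝ) :
    (Fin n → ℝ) × (Fin n → ℝ) → ℝ := fun x =>
  ∑ i : Fin n,
    (deriv (fun t => f (Function.update x.1 i t, x.2)) (x.1 i) *
       deriv (fun t => g (x.1, Function.update x.2 i t)) (x.2 i) -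
     deriv (fun t => f (x.1, Function.update x.2 i t)) (x.2 i) *
       deriv (fun t => g (Function.update x.1 i t, x.2)) (x.1 i))

open Function

section PartialDerivatives

variable {n : ℕ}

noncomputable def partialQ (f : (Fin n → ℝ) × (Fin n → ℝ) → ℝ) (i : Fin n)
    (x : (Fin n → ℝ) × (Fin n → ℝ)) : ℝ :=
  deriv (fun t => f (update x.1 i t, x.2)) (x.1 i)

noncomputable def partialP (f : (Fin n → ℝ) × (Fin n → ℝ) → ℝ) (i : Fin n)
    (x : (Fin n → ℝ) × (Fin n → ℝ)) : ℝ :=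
  deriv (fun t => f (x.1, update x.2 i t)) (x.2 i)

theorem pb_apply (f g : (Fin n → ℝ) × (Fin n → ℝ) → ℝ) (x : (Fin n → ℝ) × (Fin n → ℝ)) :
    pb f g x = ∑ i, (partialQ f i x * partialP g i x - partialP f i x * partialQ g i x) :=
  rfl

end PartialDerivatives

namespace AIII

variable (a1 a2 b1 b2 : ℝ)

-- The paper's `q₁, …, q₄` sit at indices `0, …, 3`; `angularMomentum` is its `M₁₂`.
def angularMomentum (x : (Fin 4 → ℝ) × (Fin 4 → ℝ)) : ℝ :=
  (x.1 0*x.2 2 - x.1 2*x.2 0) + (x.1 1*x.2 3 - x.1 3*x.2 1)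

noncomputable def hamiltonian (x : (Fin 4 → ℝ) × (Fin 4 → ℝ)) : ℝ :=
  (1/2)*(x.2 0^2 + x.2 1^2 + x.2 2^2 + x.2 3^2) + (1/2)*(x.1 0^2 + x.1 1^2)^2
    + (1/2)*(x.1 2^2 + x.1 3^2)^2 + (x.1 0*x.1 2 + x.1 1*x.1 3)^2
    + ((a1 - b1)/2)*x.1 0^2 + ((a1 - b2)/2)*x.1 1^2 + ((a2 - b1)/2)*x.1 2^2 + ((a2 - b2)/2)*x.1 3^2

noncomputable def firstIntegral (x : (Fin 4 → ℝ) × (Fin 4 → ℝ)) : ℝ :=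
  -(angularMomentum x)^2/(a1 - a2) + x.2 0^2 + x.2 1^2
    + ((x.1 0^2 + x.1 1^2 + x.1 2^2 + a1 - b1)*x.1 0^2
      + (x.1 0^2 + x.1 1^2 + x.1 3^2 + a1 - b2)*x.1 1^2 + 2*x.1 0*x.1 1*x.1 2*x.1 3)

theorem partialQ_hamiltonian (i : Fin 4) (q p : Fin 4 → ℝ) :
    partialQ (hamiltonian a1 a2 b1 b2) i (q, p) =
      ![2*q 0*(q 0^2 + q 1^2) + 2*(q 0*q 2 + q 1*q 3)*q 2 + (a1 - b1)*q 0,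
        2*q 1*(q 0^2 + q 1^2) + 2*(q 0*q 2 + q 1*q 3)*q 3 + (a1 - b2)*q 1,
        2*q 2*(q 2^2 + q 3^2) + 2*(q 0*q 2 + q 1*q 3)*q 0 + (a2 - b1)*q 2,
        2*q 3*(q 2^2 + q 3^2) + 2*(q 0*q 2 + q 1*q 3)*q 1 + (a2 - b2)*q 3] i := by
  fin_cases i <;> simp (disch := fun_prop) [partialQ, hamiltonian, update_apply] <;> ring

theorem partialP_hamiltonian (i : Fin 4) (q p : Fin 4 → ℝ) :
    partialP (hamiltonian a1 a2 b1 b2) i (q, p) = p i := by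
  fin_cases i <;> simp (disch := fun_prop) [partialP, hamiltonian, update_apply] <;> ring

theorem partialQ_firstIntegral (i : Fin 4) (q p : Fin 4 → ℝ) :
    partialQ (firstIntegral a1 a2 b1 b2) i (q, p) =
      -2*angularMomentum (q, p)/(a1 - a2) * ![p 2, p 3, -p 0, -p 1] i +
      ![4*q 0^3 + 4*q 0*q 1^2 + 2*q 0*q 2^2 + 2*(a1 - b1)*q 0 + 2*q 1*q 2*q 3,
        4*q 0^2*q 1 + 4*q 1^3 + 2*q 1*q 3^2 + 2*(a1 - b2)*q 1 + 2*q 0*q 2*q 3,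
        2*q 0^2*q 2 + 2*q 0*q 1*q 3,
        2*q 1^2*q 3 + 2*q 0*q 1*q 2] i := by
  fin_cases i <;>
    simp (disch := fun_prop) [partialQ, firstIntegral, angularMomentum, update_apply] <;> ring

theorem partialP_firstIntegral (i : Fin 4) (q p : Fin 4 → ℝ) :
    partialP (firstIntegral a1 a2 b1 b2) i (q, p) =
      -2*angularMomentum (q, p)/(a1 - a2) * ![-q 2, -q 3, q 0, q 1] i + ![2*p 0, 2*p 1, 0, 0] i := by
  fin_cases i <;>
    simp (disch := fun_prop) [partialP, firstIntegral, angularMomentum, update_apply] <;> ring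

end AIII

open AIII in
theorem stmt6 (a1 a2 b1 b2 : ℝ) (h : a1 ≠ a2) :
    pb (n := 4) (fun x => (1/2)*(x.2 0^2 + x.2 1^2 + x.2 2^2 + x.2 3^2) + (1/2)*(x.1 0^2 + x.1 1^2)^2 + (1/2)*(x.1 2^2 + x.1 3^2)^2 + (x.1 0*x.1 2 + x.1 1*x.1 3)^2 + ((a1 - b1)/2)*x.1 0^2 + ((a1 - b2)/2)*x.1 1^2 + ((a2 - b1)/2)*x.1 2^2 + ((a2 - b2)/2)*x.1 3^2)
      (fun x => -((x.1 0*x.2 2 - x.1 2*x.2 0) + (x.1 1*x.2 3 - x.1 3*x.2 1))^2/(a1 - a2) + x.2 0^2 + x.2 1^2 + ((x.1 0^2 + x.1 1^2 + x.1 2^2 + a1 - b1)*x.1 0^2 + (x.1 0^2 + x.1 1^2 + x.1 3^2 + a1 - b2)*x.1 1^2 + 2*x.1 0*x.1 1*x.1 2*x.1 3)) = 0 := by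
  change pb (hamiltonian a1 a2 b1 b2) (firstIntegral a1 a2 b1 b2) = 0
  funext ⟨q, p⟩
  have hne : a1 - a2 ≠ 0 := sub_ne_zero.mpr h
  simp only [pb_apply, Fin.sum_univ_four, partialQ_hamiltonian, partialP_hamiltonian,
    partialQ_firstIntegral, partialP_firstIntegral, angularMomentum, Matrix.cons_val, Pi.zero_apply]
  field_simp
  ring
end

section
/- For the A.III case with m = n = 2, the quadratic integrals f1 = -M12^2/(a1-a2) + p1^2 + p2^2 + v1 and f2 = M12^2/(a1-a2) + p3^2 + p4^2 + v2 Poisson-commute with each other, where v1 = (q1^2+q2^2+q3^2+a1-b1)q1^2 + (q1^2+q2^2+q4^2+a1-b2)q2^2 + 2q1q2q3q4 and v2 = (q1^2+q3^2+q4^2+a2-b1)q3^2 + (q2^2+q3^2+q4^2+a2-b2)q4^2 + 2q1q2q3q4. -/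
/-! With `c = a1 - a2`, write `f1 = H1 - M12²/c` and `f2 = H2 + M12²/c`. As the bracket is a
biderivation, `{f1, f2} = {H1, H2} + (2 M12 / c) {H1 + H2, M12}`. The Hamiltonian `H1 + H2` is
invariant under the simultaneous rotation of the `(q1, q3)` and `(q2, q4)` planes generated by
`M12`, except for its term `a1 (q1² + q2²) + a2 (q3² + q4²)`; hence `{H1 + H2, M12}` is `c` times
`-2 (q1 q3 + q2 q4)`, the factor `c` cancels, and what is left offsets
`{H1, H2} = 4 M12 (q1 q3 + q2 q4)`. In the code `x.1 i` and `x.2 i` are `q_(i+1)` and `p_(i+1)`. -/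

@[fun_prop]
theorem differentiable_update {𝕜 ι : Type*} [NontriviallyNormedField 𝕜] [DecidableEq ι]
    [Fintype ι] (x : ι → 𝕜) (i : ι) : Differentiable 𝕜 (Function.update x i) :=
  fun y => (hasDerivAt_update x i y).differentiableAt

theorem pb_neg_sq_div_add {n : ℕ} {A B M : (Fin n → ℝ) × (Fin n → ℝ) → ℝ} (c : ℝ)
    (hA : Differentiable ℝ A) (hB : Differentiable ℝ B) (hM : Differentiable ℝ M) :
    pb (fun x => -M x ^ 2 / c + A x) (fun x => M x ^ 2 / c + B x) =
      fun x => pb A B x + 2 * M x / c * pb (fun x => A x + B x) M x := by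
  funext x
  simp only [pb, Finset.mul_sum, ← Finset.sum_add_distrib]
  refine Finset.sum_congr rfl fun i _ => ?_
  simp (disch := fun_prop) only [deriv_fun_add, deriv_div_const, deriv.fun_neg, deriv_fun_pow,
    Function.update_eq_self]
  ring

def angularMomentum (x : (Fin 4 → ℝ) × (Fin 4 → ℝ)) : ℝ :=
  (x.1 0 * x.2 2 - x.1 2 * x.2 0) + (x.1 1 * x.2 3 - x.1 3 * x.2 1)

def partialHamiltonian1 (a1 b1 b2 : ℝ) (x : (Fin 4 → ℝ) × (Fin 4 → ℝ)) : ℝ :=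
  x.2 0 ^ 2 + x.2 1 ^ 2 + ((x.1 0 ^ 2 + x.1 1 ^ 2 + x.1 2 ^ 2 + a1 - b1) * x.1 0 ^ 2 +
    (x.1 0 ^ 2 + x.1 1 ^ 2 + x.1 3 ^ 2 + a1 - b2) * x.1 1 ^ 2 + 2 * x.1 0 * x.1 1 * x.1 2 * x.1 3)

def partialHamiltonian2 (a2 b1 b2 : ℝ) (x : (Fin 4 → ℝ) × (Fin 4 → ℝ)) : ℝ :=
  x.2 2 ^ 2 + x.2 3 ^ 2 + ((x.1 0 ^ 2 + x.1 2 ^ 2 + x.1 3 ^ 2 + a2 - b1) * x.1 2 ^ 2 +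
    (x.1 1 ^ 2 + x.1 2 ^ 2 + x.1 3 ^ 2 + a2 - b2) * x.1 3 ^ 2 + 2 * x.1 0 * x.1 1 * x.1 2 * x.1 3)

theorem differentiable_angularMomentum : Differentiable ℝ angularMomentum := by
  unfold angularMomentum
  fun_prop

theorem differentiable_partialHamiltonian1 (a1 b1 b2 : ℝ) :
    Differentiable ℝ (partialHamiltonian1 a1 b1 b2) := by
  unfold partialHamiltonian1
  fun_prop

theorem differentiable_partialHamiltonian2 (a2 b1 b2 : ℝ) :
    Differentiable ℝ (partialHamiltonian2 a2 b1 b2) := by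
  unfold partialHamiltonian2
  fun_prop

theorem pb_partialHamiltonian1_partialHamiltonian2 (a1 a2 b1 b2 : ℝ) :
    pb (partialHamiltonian1 a1 b1 b2) (partialHamiltonian2 a2 b1 b2) =
      fun x => 4 * angularMomentum x * (x.1 0 * x.1 2 + x.1 1 * x.1 3) := by
  funext x
  simp only [pb, partialHamiltonian1, partialHamiltonian2, angularMomentum, Fin.sum_univ_four,
    Function.update_self, Function.update_of_ne, ne_eq, Fin.reduceEq, not_false_eq_true]
  simp (disch := fun_prop) only [deriv_fun_add, deriv_fun_mul, deriv_fun_pow, deriv_const',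
    deriv_id'', deriv_fun_sub, deriv_const_mul_id']
  ring

theorem pb_hamiltonian_angularMomentum (a1 a2 b1 b2 : ℝ) :
    pb (fun x => partialHamiltonian1 a1 b1 b2 x + partialHamiltonian2 a2 b1 b2 x) angularMomentum =
      fun x => -2 * (a1 - a2) * (x.1 0 * x.1 2 + x.1 1 * x.1 3) := by
  funext x
  simp only [pb, partialHamiltonian1, partialHamiltonian2, angularMomentum, Fin.sum_univ_four,
    Function.update_self, Function.update_of_ne, ne_eq, Fin.reduceEq, not_false_eq_true]
  simp (disch := fun_prop) only [deriv_fun_add, deriv_fun_mul, deriv_fun_pow, deriv_const',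
    deriv_id'', deriv_fun_sub, deriv_const_mul_id']
  ring

theorem stmt7 (a1 a2 b1 b2 : ℝ) (h : a1 ≠ a2) :
    pb (n := 4) (fun x => -((x.1 0*x.2 2 - x.1 2*x.2 0) + (x.1 1*x.2 3 - x.1 3*x.2 1))^2/(a1 - a2) + x.2 0^2 + x.2 1^2 + ((x.1 0^2 + x.1 1^2 + x.1 2^2 + a1 - b1)*x.1 0^2 + (x.1 0^2 + x.1 1^2 + x.1 3^2 + a1 - b2)*x.1 1^2 + 2*x.1 0*x.1 1*x.1 2*x.1 3))
      (fun x => ((x.1 0*x.2 2 - x.1 2*x.2 0) + (x.1 1*x.2 3 - x.1 3*x.2 1))^2/(a1 - a2) + x.2 2^2 + x.2 3^2 + ((x.1 0^2 + x.1 2^2 + x.1 3^2 + a2 - b1)*x.1 2^2 + (x.1 1^2 + x.1 2^2 + x.1 3^2 + a2 - b2)*x.1 3^2 + 2*x.1 0*x.1 1*x.1 2*x.1 3)) = 0 := by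
  have hc : a1 - a2 ≠ 0 := sub_ne_zero.mpr h
  trans pb (fun x => -angularMomentum x ^ 2 / (a1 - a2) + partialHamiltonian1 a1 b1 b2 x)
    (fun x => angularMomentum x ^ 2 / (a1 - a2) + partialHamiltonian2 a2 b1 b2 x)
  · congr 1 <;> funext x <;>
      simp only [angularMomentum, partialHamiltonian1, partialHamiltonian2] <;> ring
  rw [pb_neg_sq_div_add _ (differentiable_partialHamiltonian1 a1 b1 b2)
    (differentiable_partialHamiltonian2 a2 b1 b2) differentiable_angularMomentum,
    pb_partialHamiltonian1_partialHamiltonian2, pb_hamiltonian_angularMomentum]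
  funext x
  rw [Pi.zero_apply]
  field_simp
  ring
end

section
/- For the C.I case with n = 2, the Hamiltonian H = p1^2/2 + p2^2/4 + p3^2/2 + (1/2)(q1^2+2q2^2+q3^2)^2 - (q1*q3-q2^2)^2 - b1(q1^2+q2^2) - b2(q2^2+q3^2) Poisson-commutes with F1 = p1^2 + p2^2/4 + M12^2/(b1-b2) + (q1^2+2q2^2+a1-b1)q1^2 + (q1^2+q2^2+q3^2+2q1q3+a1-b2)q2^2, where M12 = (1/2)(q1*p2 - 2q2*p1 - q3*p2 + 2q2*p3) and a1 = -b1, a2 = -b2, b1 ≠ b2. -/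
theorem deriv_hmul_self (c x : ℝ) : deriv (HMul.hMul c) x = c := by
  simpa using ((hasDerivAt_id x).const_mul c).deriv

set_option maxHeartbeats 2000000 in
theorem stmt8 (a1 a2 b1 b2 : ℝ) (ha1 : a1 = -b1) (ha2 : a2 = -b2) (h : b1 ≠ b2) :
    pb (n := 3) (fun x => x.2 0^2/2 + x.2 1^2/4 + x.2 2^2/2 + (1/2)*(x.1 0^2 + 2*x.1 1^2 + x.1 2^2)^2 - (x.1 0*x.1 2 - x.1 1^2)^2 - b1*(x.1 0^2 + x.1 1^2) - b2*(x.1 1^2 + x.1 2^2))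
      (fun x => x.2 0^2 + x.2 1^2/4 + ((1/2)*(x.1 0*x.2 1 - 2*x.1 1*x.2 0 - x.1 2*x.2 1 + 2*x.1 1*x.2 2))^2/(b1 - b2) + (x.1 0^2 + 2*x.1 1^2 + a1 - b1)*x.1 0^2 + (x.1 0^2 + x.1 1^2 + x.1 2^2 + 2*x.1 0*x.1 2 + a1 - b2)*x.1 1^2) = 0 := by
  funext x
  have hb : b1 - b2 ≠ 0 := sub_ne_zero.mpr h
  simp only [pb, Fin.sum_univ_three]
  simp [Function.update, ha1, ha2]
  simp (disch := fun_prop) only [deriv_fun_add, deriv_fun_sub, deriv_fun_mul, deriv_fun_pow, deriv_div_const,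
    deriv_const_mul_field', deriv_id'', deriv_const', deriv_const_sub, deriv_const_add,
    deriv_hmul_self]
  field_simp
  ring
end

section
/- For the BD.I case with n = 5, the Hamiltonian H = Σ_{k=1}^5 p_k^2 + 4(Σ_{k=1}^5 q_k^2)^2 - 2(2q1q5 - 2q2q4 + q3^2)^2 Poisson-commutes with the linear function r1 = (q1*p2 - p1*q2) + (q4*p5 - p4*q5). -/
/-!
`r1` generates the rotation `R_s` of the `(q₁, q₂)` and `(q₄, q₅)` planes, acting simultaneously
on `q` and `p`. `R_s` preserves `|p|²`, `|q|²` and `2 q₁ q₅ - 2 q₂ q₄ + q₃²`, hence `H`. Since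
`{H, r1} = dH(X_{r1})` and `X_{r1}` is the velocity at `s = 0` of the orbit `s ↦ (R_s q, R_s p)`,
along which `H` is constant, the bracket vanishes.
-/

open Function Real

section PartialDerivatives

variable {𝕜 ι F G : Type*} [NontriviallyNormedField 𝕜] [DecidableEq ι] [Fintype ι]
  [NormedAddCommGroup F] [NormedSpace 𝕜 F] [NormedAddCommGroup G] [NormedSpace 𝕜 G]

theorem DifferentiableAt.deriv_update_fst {f : (ι → 𝕜) × F → G} {x : (ι → 𝕜) × F}
    (hf : DifferentiableAt 𝕜 f x) (i : ι) :
    deriv (fun t => f (update x.1 i t, x.2)) (x.1 i) = fderiv 𝕜 f x (Pi.single i 1, 0) := by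
  have hγ := (hasDerivAt_update x.1 i (x.1 i)).prodMk (hasDerivAt_const (x.1 i) x.2)
  exact (hf.hasFDerivAt.comp_hasDerivAt_of_eq (x.1 i) hγ (by simp)).deriv

theorem DifferentiableAt.deriv_update_snd {f : F × (ι → 𝕜) → G} {x : F × (ι → 𝕜)}
    (hf : DifferentiableAt 𝕜 f x) (i : ι) :
    deriv (fun t => f (x.1, update x.2 i t)) (x.2 i) = fderiv 𝕜 f x (0, Pi.single i 1) := by
  have hγ := (hasDerivAt_const (x.2 i) x.1).prodMk (hasDerivAt_update x.2 i (x.2 i))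
  exact (hf.hasFDerivAt.comp_hasDerivAt_of_eq (x.2 i) hγ (by simp)).deriv

end PartialDerivatives

/-- `{f, g} = df(X_g)`, where `X_g = (∂g/∂p, -∂g/∂q)` is the Hamiltonian vector field of `g`. -/
theorem pb_apply_eq_fderiv_apply {n : ℕ} {f g : (Fin n → ℝ) × (Fin n → ℝ) → ℝ}
    {x : (Fin n → ℝ) × (Fin n → ℝ)} {a b : Fin n → ℝ} (hf : DifferentiableAt ℝ f x)
    (hgq : ∀ i, deriv (fun t => g (update x.1 i t, x.2)) (x.1 i) = a i)
    (hgp : ∀ i, deriv (fun t => g (x.1, update x.2 i t)) (x.2 i) = b i) :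
    pb f g x = fderiv ℝ f x (b, -a) := by
  have hsplit : (b, -a) = ∑ i, (b i • ((Pi.single i 1 : Fin n → ℝ), (0 : Fin n → ℝ))
      - a i • ((0 : Fin n → ℝ), (Pi.single i 1 : Fin n → ℝ))) := by
    ext j <;> simp [Prod.fst_sum, Prod.snd_sum, Finset.sum_apply, Pi.single_apply]
  simp only [pb, hf.deriv_update_fst, hf.deriv_update_snd, hgq, hgp, hsplit, map_sum, map_sub,
    map_smul, smul_eq_mul]
  exact Finset.sum_congr rfl fun i _ => by ring

theorem fderiv_apply_eq_zero_of_forall_comp_eq {𝕜 E F : Type*} [NontriviallyNormedField 𝕜]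
    [NormedAddCommGroup E] [NormedSpace 𝕜 E] [NormedAddCommGroup F] [NormedSpace 𝕜 F]
    {f : E → F} {γ : 𝕜 → E} {x v : E} {s₀ : 𝕜} (hf : DifferentiableAt 𝕜 f x)
    (hγ : HasDerivAt γ v s₀) (hγx : γ s₀ = x) (hinv : ∀ s, f (γ s) = f x) :
    fderiv 𝕜 f x v = 0 := by
  subst hγx
  have h := hf.hasFDerivAt.comp_hasDerivAt s₀ hγ
  simp only [Function.comp_def, hinv] at h
  exact h.unique (hasDerivAt_const s₀ _)

noncomputable def doubleRotation (s : ℝ) (v : Fin 5 → ℝ) : Fin 5 → ℝ :=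
  ![cos s * v 0 - sin s * v 1, sin s * v 0 + cos s * v 1, v 2,
    cos s * v 3 - sin s * v 4, sin s * v 3 + cos s * v 4]

def rotationGenerator (v : Fin 5 → ℝ) : Fin 5 → ℝ := ![-v 1, v 0, 0, -v 4, v 3]

theorem doubleRotation_zero (v : Fin 5 → ℝ) : doubleRotation 0 v = v := by
  ext i; fin_cases i <;> simp [doubleRotation]

theorem hasDerivAt_doubleRotation (v : Fin 5 → ℝ) :
    HasDerivAt (fun s => doubleRotation s v) (rotationGenerator v) 0 := by
  have hc := hasDerivAt_cos 0
  have hs := hasDerivAt_sin 0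
  rw [hasDerivAt_pi]
  intro i
  fin_cases i <;> simp only [doubleRotation, rotationGenerator]
  · exact ((hc.mul_const (v 0)).sub (hs.mul_const (v 1))).congr_deriv (by simp)
  · exact ((hs.mul_const (v 0)).add (hc.mul_const (v 1))).congr_deriv (by simp)
  · exact hasDerivAt_const 0 (v 2)
  · exact ((hc.mul_const (v 3)).sub (hs.mul_const (v 4))).congr_deriv (by simp)
  · exact ((hs.mul_const (v 3)).add (hc.mul_const (v 4))).congr_deriv (by simp)

def sumSq (v : Fin 5 → ℝ) : ℝ := v 0 ^ 2 + v 1 ^ 2 + v 2 ^ 2 + v 3 ^ 2 + v 4 ^ 2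

def bdQuadraticForm (v : Fin 5 → ℝ) : ℝ := 2 * v 0 * v 4 - 2 * v 1 * v 3 + v 2 ^ 2

theorem sumSq_doubleRotation (s : ℝ) (v : Fin 5 → ℝ) :
    sumSq (doubleRotation s v) = sumSq v := by
  simp only [sumSq, doubleRotation, Fin.isValue, Matrix.cons_val_zero, Matrix.cons_val_one,
    Matrix.cons_val]
  linear_combination (v 0 ^ 2 + v 1 ^ 2 + v 3 ^ 2 + v 4 ^ 2) * sin_sq_add_cos_sq s

theorem bdQuadraticForm_doubleRotation (s : ℝ) (v : Fin 5 → ℝ) :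
    bdQuadraticForm (doubleRotation s v) = bdQuadraticForm v := by
  simp only [bdQuadraticForm, doubleRotation, Fin.isValue, Matrix.cons_val_zero,
    Matrix.cons_val_one, Matrix.cons_val]
  linear_combination 2 * (v 0 * v 4 - v 1 * v 3) * sin_sq_add_cos_sq s

def bdHamiltonian (x : (Fin 5 → ℝ) × (Fin 5 → ℝ)) : ℝ :=
  sumSq x.2 + 4 * sumSq x.1 ^ 2 - 2 * bdQuadraticForm x.1 ^ 2

def r1 (x : (Fin 5 → ℝ) × (Fin 5 → ℝ)) : ℝ :=
  (x.1 0 * x.2 1 - x.2 0 * x.1 1) + (x.1 3 * x.2 4 - x.2 3 * x.1 4)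

theorem bdHamiltonian_doubleRotation (s : ℝ) (x : (Fin 5 → ℝ) × (Fin 5 → ℝ)) :
    bdHamiltonian (doubleRotation s x.1, doubleRotation s x.2) = bdHamiltonian x := by
  simp only [bdHamiltonian, sumSq_doubleRotation, bdQuadraticForm_doubleRotation]

theorem deriv_r1_update_fst (x : (Fin 5 → ℝ) × (Fin 5 → ℝ)) (i : Fin 5) :
    deriv (fun t => r1 (update x.1 i t, x.2)) (x.1 i) = (-rotationGenerator x.2) i := by
  fin_cases i <;> simp [r1, rotationGenerator]

theorem deriv_r1_update_snd (x : (Fin 5 → ℝ) × (Fin 5 → ℝ)) (i : Fin 5) :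
    deriv (fun t => r1 (x.1, update x.2 i t)) (x.2 i) = rotationGenerator x.1 i := by
  fin_cases i <;> simp [r1, rotationGenerator]

theorem stmt10 :
    pb (n := 5) (fun x => x.2 0^2 + x.2 1^2 + x.2 2^2 + x.2 3^2 + x.2 4^2 + 4*(x.1 0^2 + x.1 1^2 + x.1 2^2 + x.1 3^2 + x.1 4^2)^2 - 2*(2*x.1 0*x.1 4 - 2*x.1 1*x.1 3 + x.1 2^2)^2) (fun x => (x.1 0*x.2 1 - x.2 0*x.1 1) + (x.1 3*x.2 4 - x.2 3*x.1 4)) = 0 := by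
  change pb bdHamiltonian r1 = 0
  funext x
  have hH : DifferentiableAt ℝ bdHamiltonian x := by
    unfold bdHamiltonian sumSq bdQuadraticForm
    fun_prop
  rw [pb_apply_eq_fderiv_apply hH (deriv_r1_update_fst x) (deriv_r1_update_snd x), neg_neg,
    Pi.zero_apply]
  refine fderiv_apply_eq_zero_of_forall_comp_eq hH
    ((hasDerivAt_doubleRotation x.1).prodMk (hasDerivAt_doubleRotation x.2)) ?_
    (bdHamiltonian_doubleRotation · x)
  rw [doubleRotation_zero, doubleRotation_zero]
end

section
/- For the BD.I case with n = 5, the Hamiltonian H = Σ_{k=1}^5 p_k^2 + 4(Σ_{k=1}^5 q_k^2)^2 - 2(2q1q5 - 2q2q4 + q3^2)^2 Poisson-commutes with each of the four linear functions r1 = (q1p2-p1q2)+(q4p5-p4q5), r2 = (q2p3-p2q3)+(q3p4-p3q4), r3 = (q1p3-p1q3)+(q5p3-p5q3), r4 = (q1p4-p1q4)+(q2p5-p2q5). -/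
open Matrix Function

section Partials

variable {ι : Type*} [Fintype ι] [DecidableEq ι]

theorem deriv_update_eq_fderiv {f : (ι → ℝ) → ℝ} {x : ι → ℝ} (hf : DifferentiableAt ℝ f x)
    (i : ι) : deriv (fun t => f (update x i t)) (x i) = fderiv ℝ f x (Pi.single i 1) := by
  have hf' : HasFDerivAt f (fderiv ℝ f x) (update x i (x i)) := by
    rw [update_eq_self]; exact hf.hasFDerivAt
  exact (hf'.comp_hasDerivAt (x i) (hasDerivAt_update x i (x i))).deriv

theorem sum_deriv_update_mul_eq_fderiv {f : (ι → ℝ) → ℝ} {x : ι → ℝ}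
    (hf : DifferentiableAt ℝ f x) (v : ι → ℝ) :
    ∑ i, deriv (fun t => f (update x i t)) (x i) * v i = fderiv ℝ f x v := by
  have hv : v = ∑ i, v i • Pi.single i (1 : ℝ) := by
    ext j; simp [Finset.sum_apply, Pi.single_apply]
  conv_rhs => rw [hv]
  simp [deriv_update_eq_fderiv hf, mul_comm]

theorem deriv_dotProduct_update (w x : ι → ℝ) (i : ι) :
    deriv (fun t => w ⬝ᵥ update x i t) (x i) = w i := by
  have hcoord := hasDerivAt_pi.1 (hasDerivAt_update x i (x i))
  have hsum := HasDerivAt.fun_sum (u := Finset.univ) fun j _ => (hcoord j).const_mul (w j)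
  simpa [dotProduct, Pi.single_apply] using hsum.deriv

end Partials

section QuadraticForm

variable {ι : Type*} [Fintype ι]

theorem differentiable_dotProduct_mulVec (M : Matrix ι ι ℝ) :
    Differentiable ℝ fun y : ι → ℝ => y ⬝ᵥ M *ᵥ y := by
  simp only [dotProduct, mulVec]; fun_prop

theorem differentiable_dotProduct_self : Differentiable ℝ fun y : ι → ℝ => y ⬝ᵥ y := by
  simp only [dotProduct]; fun_prop

theorem fderiv_dotProduct_mulVec_apply (M : Matrix ι ι ℝ) (q v : ι → ℝ) :
    fderiv ℝ (fun y => y ⬝ᵥ M *ᵥ y) q v = v ⬝ᵥ M *ᵥ q + q ⬝ᵥ M *ᵥ v := by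
  rw [← (differentiable_dotProduct_mulVec M q).lineDeriv_eq_fderiv, lineDeriv]
  have hline : (fun t : ℝ => (q + t • v) ⬝ᵥ M *ᵥ (q + t • v)) =
      fun t => q ⬝ᵥ M *ᵥ q + t * (v ⬝ᵥ M *ᵥ q + q ⬝ᵥ M *ᵥ v) + t ^ 2 * (v ⬝ᵥ M *ᵥ v) := by
    ext t
    simp only [mulVec_add, mulVec_smul, add_dotProduct, dotProduct_add, smul_dotProduct,
      dotProduct_smul, smul_eq_mul]
    ring
  rw [hline]
  have hpoly :=
    ((hasDerivAt_id (0 : ℝ)).mul_const (v ⬝ᵥ M *ᵥ q + q ⬝ᵥ M *ᵥ v)).const_add (q ⬝ᵥ M *ᵥ q)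
      |>.fun_add (((hasDerivAt_id (0 : ℝ)).pow 2).mul_const (v ⬝ᵥ M *ᵥ v))
  simpa using hpoly.deriv

theorem fderiv_dotProduct_mulVec_apply_mulVec_eq_zero {M A : Matrix ι ι ℝ}
    (hAM : Aᵀ * M + M * A = 0) (q : ι → ℝ) :
    fderiv ℝ (fun y => y ⬝ᵥ M *ᵥ y) q (A *ᵥ q) = 0 := by
  rw [fderiv_dotProduct_mulVec_apply]
  calc (A *ᵥ q) ⬝ᵥ M *ᵥ q + q ⬝ᵥ M *ᵥ A *ᵥ q = q ⬝ᵥ (Aᵀ * M + M * A) *ᵥ q := by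
        rw [add_mulVec, dotProduct_add, ← mulVec_mulVec, ← mulVec_mulVec,
          dotProduct_transpose_mulVec, dotProduct_comm]
    _ = 0 := by rw [hAM, zero_mulVec, dotProduct_zero]

theorem fderiv_dotProduct_self_apply_mulVec_eq_zero [DecidableEq ι] {A : Matrix ι ι ℝ}
    (hA : Aᵀ = -A) (q : ι → ℝ) : fderiv ℝ (fun y => y ⬝ᵥ y) q (A *ᵥ q) = 0 := by
  simpa using fderiv_dotProduct_mulVec_apply_mulVec_eq_zero (M := 1) (by simp [hA]) q

noncomputable def quarticPotential (M : Matrix ι ι ℝ) (q : ι → ℝ) : ℝ :=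
  4 * (q ⬝ᵥ q) ^ 2 - 2 * (q ⬝ᵥ M *ᵥ q) ^ 2

theorem differentiable_quarticPotential (M : Matrix ι ι ℝ) :
    Differentiable ℝ (quarticPotential M) :=
  ((differentiable_dotProduct_self.fun_pow 2).const_mul 4).sub
    (((differentiable_dotProduct_mulVec M).fun_pow 2).const_mul 2)

theorem fderiv_quarticPotential_apply_mulVec_eq_zero [DecidableEq ι] {M A : Matrix ι ι ℝ}
    (hA : Aᵀ = -A) (hAM : Aᵀ * M + M * A = 0) (q : ι → ℝ) :
    fderiv ℝ (quarticPotential M) q (A *ᵥ q) = 0 := by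
  have hs := differentiable_dotProduct_self (ι := ι) q
  have hQ := differentiable_dotProduct_mulVec M q
  unfold quarticPotential
  rw [fderiv_fun_sub ((hs.fun_pow 2).const_mul 4) ((hQ.fun_pow 2).const_mul 2),
    fderiv_const_mul (hs.fun_pow 2), fderiv_const_mul (hQ.fun_pow 2), fderiv_fun_pow _ hs,
    fderiv_fun_pow _ hQ]
  simp [fderiv_dotProduct_self_apply_mulVec_eq_zero hA,
    fderiv_dotProduct_mulVec_apply_mulVec_eq_zero hAM]

end QuadraticForm

section PlaneRotation

variable {ι : Type*} [DecidableEq ι]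

def planeRotation (i j : ι) : Matrix ι ι ℝ := single j i 1 - single i j 1

theorem transpose_planeRotation (i j : ι) : (planeRotation i j)ᵀ = -planeRotation i j := by
  simp [planeRotation, transpose_single]

theorem planeRotation_mulVec_dotProduct [Fintype ι] (i j : ι) (q p : ι → ℝ) :
    (planeRotation i j *ᵥ q) ⬝ᵥ p = q i * p j - p i * q j := by
  rw [dotProduct_comm, planeRotation, sub_mulVec, dotProduct_sub, single_mulVec, single_mulVec]
  change p ⬝ᵥ Pi.single j (1 * q i) - p ⬝ᵥ Pi.single i (1 * q j) = _
  rw [dotProduct_single, dotProduct_single]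
  ring

end PlaneRotation

section Bracket

variable {n : ℕ}

theorem pb_add_mulVec_dotProduct_apply {T V : (Fin n → ℝ) → ℝ}
    (A : Matrix (Fin n) (Fin n) ℝ) {x : (Fin n → ℝ) × (Fin n → ℝ)}
    (hT : DifferentiableAt ℝ T x.2) (hV : DifferentiableAt ℝ V x.1) :
    pb (fun x => T x.2 + V x.1) (fun x => (A *ᵥ x.1) ⬝ᵥ x.2) x =
      fderiv ℝ V x.1 (A *ᵥ x.1) - fderiv ℝ T x.2 (Aᵀ *ᵥ x.2) := by
  have hg : ∀ y, (A *ᵥ y) ⬝ᵥ x.2 = (Aᵀ *ᵥ x.2) ⬝ᵥ y := fun y => by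
    rw [dotProduct_comm, dotProduct_mulVec, mulVec_transpose]
  simp only [pb, hg, deriv_const_add, deriv_add_const, deriv_dotProduct_update]
  rw [Finset.sum_sub_distrib, sum_deriv_update_mul_eq_fderiv hV,
    sum_deriv_update_mul_eq_fderiv hT]

noncomputable def quarticHamiltonian (M : Matrix (Fin n) (Fin n) ℝ)
    (x : (Fin n → ℝ) × (Fin n → ℝ)) : ℝ :=
  x.2 ⬝ᵥ x.2 + quarticPotential M x.1

theorem pb_quarticHamiltonian_mulVec_dotProduct_eq_zero {M A : Matrix (Fin n) (Fin n) ℝ}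
    (hA : Aᵀ = -A) (hAM : Aᵀ * M + M * A = 0) :
    pb (quarticHamiltonian M) (fun x => (A *ᵥ x.1) ⬝ᵥ x.2) = 0 := by
  funext x
  unfold quarticHamiltonian
  have hAt : Aᵀᵀ = -Aᵀ := by rw [transpose_transpose, hA, neg_neg]
  rw [pb_add_mulVec_dotProduct_apply (T := fun p => p ⬝ᵥ p) A
      (differentiable_dotProduct_self _) (differentiable_quarticPotential M _),
    fderiv_quarticPotential_apply_mulVec_eq_zero hA hAM,
    fderiv_dotProduct_self_apply_mulVec_eq_zero hAt, sub_zero, Pi.zero_apply]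

theorem pb_quarticHamiltonian_planeRotation_add_eq_zero {M : Matrix (Fin n) (Fin n) ℝ}
    (a b c d : Fin n)
    (h : (planeRotation a b + planeRotation c d)ᵀ * M +
      M * (planeRotation a b + planeRotation c d) = 0) :
    pb (quarticHamiltonian M)
      (fun x => (x.1 a * x.2 b - x.2 a * x.1 b) + (x.1 c * x.2 d - x.2 c * x.1 d)) = 0 := by
  have hA : (planeRotation a b + planeRotation c d)ᵀ =
      -(planeRotation a b + planeRotation c d) := by
    rw [transpose_add, transpose_planeRotation, transpose_planeRotation, neg_add]
  convert pb_quarticHamiltonian_mulVec_dotProduct_eq_zero hA h using 2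
  funext x
  rw [add_mulVec, add_dotProduct, planeRotation_mulVec_dotProduct, planeRotation_mulVec_dotProduct]

end Bracket

/-- The Gram matrix of `Q(q) = 2 q₁q₅ - 2 q₂q₄ + q₃²`. -/
def bdForm : Matrix (Fin 5) (Fin 5) ℝ :=
  !![0, 0, 0, 0, 1; 0, 0, 0, -1, 0; 0, 0, 1, 0, 0; 0, -1, 0, 0, 0; 1, 0, 0, 0, 0]

theorem stmt11 :
    pb (n := 5) (fun x => x.2 0^2 + x.2 1^2 + x.2 2^2 + x.2 3^2 + x.2 4^2 + 4*(x.1 0^2 + x.1 1^2 + x.1 2^2 + x.1 3^2 + x.1 4^2)^2 - 2*(2*x.1 0*x.1 4 - 2*x.1 1*x.1 3 + x.1 2^2)^2) (fun x => (x.1 0*x.2 1 - x.2 0*x.1 1) + (x.1 3*x.2 4 - x.2 3*x.1 4)) = 0 ∧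
    pb (n := 5) (fun x => x.2 0^2 + x.2 1^2 + x.2 2^2 + x.2 3^2 + x.2 4^2 + 4*(x.1 0^2 + x.1 1^2 + x.1 2^2 + x.1 3^2 + x.1 4^2)^2 - 2*(2*x.1 0*x.1 4 - 2*x.1 1*x.1 3 + x.1 2^2)^2) (fun x => (x.1 1*x.2 2 - x.2 1*x.1 2) + (x.1 2*x.2 3 - x.2 2*x.1 3)) = 0 ∧
    pb (n := 5) (fun x => x.2 0^2 + x.2 1^2 + x.2 2^2 + x.2 3^2 + x.2 4^2 + 4*(x.1 0^2 + x.1 1^2 + x.1 2^2 + x.1 3^2 + x.1 4^2)^2 - 2*(2*x.1 0*x.1 4 - 2*x.1 1*x.1 3 + x.1 2^2)^2) (fun x => (x.1 0*x.2 2 - x.2 0*x.1 2) + (x.1 4*x.2 2 - x.2 4*x.1 2)) = 0 ∧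
    pb (n := 5) (fun x => x.2 0^2 + x.2 1^2 + x.2 2^2 + x.2 3^2 + x.2 4^2 + 4*(x.1 0^2 + x.1 1^2 + x.1 2^2 + x.1 3^2 + x.1 4^2)^2 - 2*(2*x.1 0*x.1 4 - 2*x.1 1*x.1 3 + x.1 2^2)^2) (fun x => (x.1 0*x.2 3 - x.2 0*x.1 3) + (x.1 1*x.2 4 - x.2 1*x.1 4)) = 0 := by
  have hH : (fun x : (Fin 5 → ℝ) × (Fin 5 → ℝ) =>
      x.2 0 ^ 2 + x.2 1 ^ 2 + x.2 2 ^ 2 + x.2 3 ^ 2 + x.2 4 ^ 2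
        + 4 * (x.1 0 ^ 2 + x.1 1 ^ 2 + x.1 2 ^ 2 + x.1 3 ^ 2 + x.1 4 ^ 2) ^ 2
        - 2 * (2 * x.1 0 * x.1 4 - 2 * x.1 1 * x.1 3 + x.1 2 ^ 2) ^ 2) =
      quarticHamiltonian bdForm := by
    funext x
    simp only [quarticHamiltonian, quarticPotential, bdForm, dotProduct, mulVec, Fin.sum_univ_five,
      of_apply, cons_val', cons_val_fin_one, cons_val_zero, cons_val_one, cons_val, zero_mul,
      add_zero, one_mul, zero_add, neg_mul, mul_neg]
    ring
  rw [hH]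
  refine ⟨pb_quarticHamiltonian_planeRotation_add_eq_zero 0 1 3 4 ?_,
    pb_quarticHamiltonian_planeRotation_add_eq_zero 1 2 2 3 ?_,
    pb_quarticHamiltonian_planeRotation_add_eq_zero 0 2 4 2 ?_,
    pb_quarticHamiltonian_planeRotation_add_eq_zero 0 3 1 4 ?_⟩ <;>
  · ext i j
    simp only [Matrix.add_apply, mul_apply, Fin.sum_univ_five, Matrix.zero_apply, transpose_apply,
      planeRotation, Matrix.sub_apply, single_apply]
    fin_cases i <;> fin_cases j <;> simp [bdForm]
end
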